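/- The axiom system E_RS = E_1 ∪ {RS, RSP1, RSP2, EL2} is sound and ground-complete modulo ready simulation equivalence ∼_RS over CCS. -/

import Mathlib

/-- Actions: names, co-names and the silent action τ. -/
inductive Act (A : Type) : Type
  | name : A → Act A
  | coname : A → Act A
  | tau : Act A
  deriving DecidableEq

/-- Complementation of actions (`co` of τ is τ; it is only ever used on non-τ actions). -/
def Act.co {A : Type} : Act A → Act A
  | .name a => .coname a
  | .coname a => .name a
  | .tau => .tau

/-- CCS terms: 0, variables, prefixing, choice and parallel composition. -/
inductive Tm (A : Type) : Type
  | nil : Tm A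
  | var : ℕ → Tm A
  | pre : Act A → Tm A → Tm A
  | plus : Tm A → Tm A → Tm A
  | par : Tm A → Tm A → Tm A

/-- The SOS transition relation of CCS. -/
inductive Step {A : Type} : Tm A → Act A → Tm A → Prop
  | pre (μ : Act A) (t : Tm A) : Step (.pre μ t) μ t
  | plusL {t u t' : Tm A} {μ : Act A} : Step t μ t' → Step (.plus t u) μ t'
  | plusR {t u u' : Tm A} {μ : Act A} : Step u μ u' → Step (.plus t u) μ u'
  | parL {t u t' : Tm A} {μ : Act A} : Step t μ t' → Step (.par t u) μ (.par t' u)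
  | parR {t u u' : Tm A} {μ : Act A} : Step u μ u' → Step (.par t u) μ (.par t u')
  | comm {t u t' u' : Tm A} {α : Act A} : α ≠ Act.tau → Step t α t' → Step u α.co u' →
      Step (.par t u) .tau (.par t' u')

/-- A term is closed (a process) if no variable occurs in it. -/
def Closed {A : Type} : Tm A → Prop
  | .nil => True
  | .var _ => False
  | .pre _ t => Closed t
  | .plus t u => Closed t ∧ Closed u
  | .par t u => Closed t ∧ Closed u

/-- Applying a substitution to a term. -/
def subst {A : Type} (σ : ℕ → Tm A) : Tm A → Tm A
  | .nil => .nil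
  | .var x => σ x
  | .pre μ t => .pre μ (subst σ t)
  | .plus t u => .plus (subst σ t) (subst σ u)
  | .par t u => .par (subst σ t) (subst σ u)

/-- A substitution is closed if all its values are closed. -/
def ClosedSubst {A : Type} (σ : ℕ → Tm A) : Prop := ∀ x, Closed (σ x)

/-- `R` is a bisimulation (symmetric, with the transfer property). -/
def IsBisim {A : Type} (R : Tm A → Tm A → Prop) : Prop :=
  (∀ p q, R p q → R q p) ∧
  (∀ p q μ p', R p q → Step p μ p' → ∃ q', Step q μ q' ∧ R p' q')

/-- Bisimilarity: the largest bisimulation. -/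
def Bisim {A : Type} (p q : Tm A) : Prop := ∃ R, IsBisim R ∧ R p q

/-- Equations are pairs of terms. -/
abbrev Eqn (A : Type) := Tm A × Tm A

/-- Derivability in equational logic from the axiom system `E`. -/
inductive Deriv {A : Type} (E : Set (Eqn A)) : Tm A → Tm A → Prop
  | ax {t u : Tm A} (σ : ℕ → Tm A) (h : (t, u) ∈ E) : Deriv E (subst σ t) (subst σ u)
  | refl (t : Tm A) : Deriv E t t
  | symm {t u : Tm A} (h : Deriv E t u) : Deriv E u t
  | trans {t u v : Tm A} (h₁ : Deriv E t u) (h₂ : Deriv E u v) : Deriv E t v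
  | pre (μ : Act A) {t u : Tm A} (h : Deriv E t u) : Deriv E (.pre μ t) (.pre μ u)
  | plus {t u t' u' : Tm A} (h₁ : Deriv E t u) (h₂ : Deriv E t' u') :
      Deriv E (.plus t t') (.plus u u')
  | par {t u t' u' : Tm A} (h₁ : Deriv E t u) (h₂ : Deriv E t' u') :
      Deriv E (.par t t') (.par u u')

/-- An equation is sound modulo `sim` if all its closed instances are related by `sim`. -/
def EqnSound {A : Type} (sim : Tm A → Tm A → Prop) (t u : Tm A) : Prop :=
  ∀ σ : ℕ → Tm A, ClosedSubst σ → sim (subst σ t) (subst σ u)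

/-- An axiom system is sound modulo `sim` if each of its equations is. -/
def SystemSound {A : Type} (sim : Tm A → Tm A → Prop) (E : Set (Eqn A)) : Prop :=
  ∀ e ∈ E, EqnSound sim e.1 e.2

/-- An axiom system is ground-complete modulo `sim` if it derives every valid
closed equation. -/
def GroundComplete {A : Type} (sim : Tm A → Tm A → Prop) (E : Set (Eqn A)) : Prop :=
  ∀ p q : Tm A, Closed p → Closed q → sim p q → Deriv E p q

/-- `sumF g n` is the sum `g 1 + ⋯ + g n` (empty sum being 0, no padding for `n = 1`). -/
def sumF {A : Type} (g : ℕ → Tm A) : ℕ → Tm A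
  | 0 => .nil
  | 1 => g 1
  | n + 2 => .plus (sumF g (n + 1)) (g (n + 2))

/-- The basic axioms A0–A3 for choice (variables `x, y, z` rendered as `var 0, 1, 2`). -/
def E0 (A : Type) : Set (Eqn A) :=
  { (.plus (.var 0) .nil, .var 0),
    (.plus (.var 0) (.var 1), .plus (.var 1) (.var 0)),
    (.plus (.plus (.var 0) (.var 1)) (.var 2), .plus (.var 0) (.plus (.var 1) (.var 2))),
    (.plus (.var 0) (.var 0), .var 0) }

/-- `E₁ = E₀ ∪ {P0 : x ‖ 0 ≈ x, P1 : x ‖ y ≈ y ‖ x}`. -/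
def E1 (A : Type) : Set (Eqn A) :=
  E0 A ∪ { (.par (.var 0) .nil, .var 0),
           (.par (.var 0) (.var 1), .par (.var 1) (.var 0)) }

/-- `R` is a simulation. -/
def IsSim {A : Type} (R : Tm A → Tm A → Prop) : Prop :=
  ∀ p q μ p', R p q → Step p μ p' → ∃ q', Step q μ q' ∧ R p' q'

/-- `R` is a ready simulation: a simulation relating only processes with equal initials. -/
def IsReadySim {A : Type} (R : Tm A → Tm A → Prop) : Prop :=
  IsSim R ∧ ∀ p q, R p q → ∀ μ, (∃ p', Step p μ p') ↔ (∃ q', Step q μ q')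

/-- Ready simulation equivalence. -/
def RSEq {A : Type} (p q : Tm A) : Prop :=
  (∃ R, IsReadySim R ∧ R p q) ∧ (∃ R, IsReadySim R ∧ R q p)

/-- Sum of a list of terms (the empty sum being 0). -/
def listSum {A : Type} : List (Tm A) → Tm A
  | [] => .nil
  | [t] => t
  | t :: u :: ts => .plus t (listSum (u :: ts))

/-- `prefixed I` is the term `Σ_{(μ,x) ∈ I} μ.x`. -/
def prefixed {A : Type} (I : List (Act A × ℕ)) : Tm A :=
  listSum (I.map fun p => Tm.pre p.1 (.var p.2))

/-- The axiom schema RS: `μ.(ν.x + ν.y + z) ≈ μ.(ν.x + ν.y + z) + μ.(ν.x + z)`. -/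
def RS (A : Type) : Set (Eqn A) :=
  { e | ∃ μ ν : Act A,
      e = (.pre μ (.plus (.plus (.pre ν (.var 0)) (.pre ν (.var 1))) (.var 2)),
           .plus (.pre μ (.plus (.plus (.pre ν (.var 0)) (.pre ν (.var 1))) (.var 2)))
                 (.pre μ (.plus (.pre ν (.var 0)) (.var 2)))) }

/-- The axiom schema RSP1 (variables `x, y, u, z, w, v` rendered as `var 0, …, var 5`). -/
def RSP1 (A : Type) : Set (Eqn A) :=
  { e | ∃ μ ν : Act A,
      e = (.par (.plus (.plus (.pre μ (.var 0)) (.pre μ (.var 1))) (.var 2))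
                (.plus (.plus (.pre ν (.var 3)) (.pre ν (.var 4))) (.var 5)),
           .plus (.plus (.plus
             (.par (.plus (.pre μ (.var 0)) (.var 2))
                   (.plus (.plus (.pre ν (.var 3)) (.pre ν (.var 4))) (.var 5)))
             (.par (.plus (.pre μ (.var 1)) (.var 2))
                   (.plus (.plus (.pre ν (.var 3)) (.pre ν (.var 4))) (.var 5))))
             (.par (.plus (.plus (.pre μ (.var 0)) (.pre μ (.var 1))) (.var 2))
                   (.plus (.pre ν (.var 3)) (.var 5))))
             (.par (.plus (.plus (.pre μ (.var 0)) (.pre μ (.var 1))) (.var 2))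
                   (.plus (.pre ν (.var 4)) (.var 5)))) }

/-- The axiom schema RSP2, for finite `I` with pairwise distinct actions `μ_i` and
pairwise distinct variables. -/
def RSP2 (A : Type) : Set (Eqn A) :=
  { e | ∃ (L : List (Act A × ℕ)) (ν : Act A) (iy iz iw : ℕ),
      (L.map Prod.fst).Nodup ∧ (L.map Prod.snd ++ [iy, iz, iw]).Nodup ∧
      e = (.par (prefixed L)
                (.plus (.plus (.pre ν (.var iy)) (.pre ν (.var iz))) (.var iw)),
           .plus (.plus
             (.par (prefixed L) (.plus (.pre ν (.var iy)) (.var iw)))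
             (.par (prefixed L) (.plus (.pre ν (.var iz)) (.var iw))))
             (listSum (L.map fun p =>
               Tm.pre p.1 (.par (.var p.2)
                 (.plus (.plus (.pre ν (.var iy)) (.pre ν (.var iz))) (.var iw)))))) }

/-- The instances EL2 of the expansion law in which the actions on each side are
pairwise distinct (and all variables are pairwise distinct). -/
def EL2 (A : Type) [DecidableEq A] : Set (Eqn A) :=
  { e | ∃ I J : List (Act A × ℕ),
      (I.map Prod.fst).Nodup ∧ (J.map Prod.fst).Nodup ∧
      (I.map Prod.snd ++ J.map Prod.snd).Nodup ∧
      e = (.par (prefixed I) (prefixed J),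
           listSum
             ((I.map fun p => Tm.pre p.1 (.par (.var p.2) (prefixed J))) ++
              (J.map fun q => Tm.pre q.1 (.par (prefixed I) (.var q.2))) ++
              (I.flatMap fun p =>
                (J.filter fun q => decide (p.1 ≠ Act.tau ∧ p.1 = q.1.co)).map fun q =>
                  Tm.pre .tau (.par (.var p.2) (.var q.2))))) }


/-!
Soundness: ready simulation equivalence is a congruence for prefixing, choice and parallel
composition, and every instance of each axiom has ready-similar sides, because the two sides
have the same initial actions and every transition of one side is matched by the other.

Completeness goes through normal forms. Using EL2, RSP1 and RSP2, every process is provably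
equal to a closed BCCSP term (one without `‖`): for a parallel composition of two such terms,
EL2 expands it when neither component has two summands with the same action, and otherwise
RSP1 or RSP2 splits such a pair of summands; in all cases the pieces that remain to be
normalised have fewer prefixes. For BCCSP terms `p ⊑ q` (ready simulation) implies
`μ.q ≈ μ.q + μ.p`, by induction on size: match each summand `a.p'` of `p` with a summand
`a.q'` of `q` with `p' ⊑ q'`, and use RS to delete the summands of `μ.(Σ ...)` that are
not matched, which is possible because `p` and `q` have the same initial actions. Hence
`q ≈ q + p`, and ready simulation equivalent BCCSP terms are provably equal.
-/

section Transitions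

variable {A : Type}

@[simp] theorem Act.co_co (α : Act A) : α.co.co = α := by cases α <;> rfl

theorem Act.co_ne_tau {α : Act A} (h : α ≠ .tau) : α.co ≠ .tau := by
  cases α <;> simp_all [Act.co]

theorem not_step_nil {μ : Act A} {t : Tm A} : ¬ Step .nil μ t := nofun

theorem step_pre_iff {ν μ : Act A} {u t : Tm A} : Step (.pre ν u) μ t ↔ μ = ν ∧ t = u :=
  ⟨by rintro ⟨⟩; exact ⟨rfl, rfl⟩, by rintro ⟨rfl, rfl⟩; exact .pre _ _⟩

theorem step_plus_iff {a b : Tm A} {μ : Act A} {t : Tm A} :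
    Step (.plus a b) μ t ↔ Step a μ t ∨ Step b μ t :=
  ⟨by intro h; cases h with | plusL h => exact .inl h | plusR h => exact .inr h,
    by rintro (h | h); exacts [.plusL h, .plusR h]⟩

theorem step_par_iff {a b : Tm A} {μ : Act A} {t : Tm A} :
    Step (.par a b) μ t ↔
      (∃ a', Step a μ a' ∧ t = .par a' b) ∨ (∃ b', Step b μ b' ∧ t = .par a b') ∨
      (μ = .tau ∧ ∃ α a' b', α ≠ .tau ∧ Step a α a' ∧ Step b α.co b' ∧ t = .par a' b') := by
  constructor
  · intro h
    cases h with
    | parL h => exact .inl ⟨_, h, rfl⟩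
    | parR h => exact .inr (.inl ⟨_, h, rfl⟩)
    | comm hα h₁ h₂ => exact .inr (.inr ⟨rfl, _, _, _, hα, h₁, h₂, rfl⟩)
  · rintro (⟨a', h, rfl⟩ | ⟨b', h, rfl⟩ | ⟨rfl, α, a', b', hα, h₁, h₂, rfl⟩)
    exacts [.parL h, .parR h, .comm hα h₁ h₂]

theorem step_listSum_iff {l : List (Tm A)} {μ : Act A} {t : Tm A} :
    Step (listSum l) μ t ↔ ∃ s ∈ l, Step s μ t := by
  match l with
  | [] => simp [listSum, not_step_nil]
  | [s] => simp [listSum]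
  | s :: s' :: l => simp [listSum, step_plus_iff, step_listSum_iff]

end Transitions

section NormalForms

variable {A : Type}

namespace Tm

def IsPrefixSum : Tm A → Prop
  | nil | pre _ _ => True
  | plus t u => t.IsPrefixSum ∧ u.IsPrefixSum
  | var _ | par _ _ => False

/-- Closed BCCSP terms: the processes without `‖`. -/
def IsBCCSP : Tm A → Prop
  | nil => True
  | pre _ t => t.IsBCCSP
  | plus t u => t.IsBCCSP ∧ u.IsBCCSP
  | var _ | par _ _ => False

def summands : Tm A → List (Act A × Tm A)
  | pre μ t => [(μ, t)]
  | plus t u => t.summands ++ u.summands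
  | nil | var _ | par _ _ => []

def size : Tm A → ℕ
  | nil | var _ => 0
  | pre _ t => t.size + 1
  | plus t u | par t u => t.size + u.size

theorem IsBCCSP.isPrefixSum {t : Tm A} (h : t.IsBCCSP) : t.IsPrefixSum := by
  induction t with
  | plus t u iht ihu => exact ⟨iht h.1, ihu h.2⟩
  | _ => simp_all [IsBCCSP, IsPrefixSum]

theorem IsBCCSP.of_mem_summands {t : Tm A} (h : t.IsBCCSP) {x : Act A × Tm A}
    (hx : x ∈ t.summands) : x.2.IsBCCSP := by
  induction t with
  | pre μ t => simp only [summands, List.mem_singleton] at hx; exact hx ▸ h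
  | plus t u iht ihu =>
    rcases List.mem_append.1 hx with hx | hx
    exacts [iht h.1 hx, ihu h.2 hx]
  | _ => simp [summands] at hx

theorem IsPrefixSum.step_iff {t : Tm A} (h : t.IsPrefixSum) {μ : Act A} {t' : Tm A} :
    Step t μ t' ↔ (μ, t') ∈ t.summands := by
  induction t with
  | nil => simp [summands, not_step_nil]
  | pre ν u => simp [summands, step_pre_iff]
  | plus a b iha ihb => simp [summands, step_plus_iff, iha h.1, ihb h.2]
  | var _ | par _ _ => exact h.elim

theorem size_lt_of_mem_summands {t : Tm A} {x : Act A × Tm A} (hx : x ∈ t.summands) :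
    x.2.size < t.size := by
  induction t with
  | pre μ u => simp only [summands, List.mem_singleton] at hx; simp [hx, size]
  | plus a b iha ihb =>
    simp only [summands, List.mem_append] at hx
    rcases hx with hx | hx
    · exact (iha hx).trans_le (Nat.le_add_right _ _)
    · exact (ihb hx).trans_le (Nat.le_add_left _ _)
  | _ => simp [summands] at hx

theorem IsPrefixSum.size_eq {t : Tm A} (h : t.IsPrefixSum) :
    t.size = (t.summands.map fun x => x.2.size + 1).sum := by
  induction t with
  | plus a b iha ihb => simp [size, summands, iha h.1, ihb h.2]
  | var _ | par _ _ => exact h.elim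
  | _ => simp [size, summands]

end Tm

def prefixSum (L : List (Act A × Tm A)) : Tm A :=
  listSum (L.map fun x => .pre x.1 x.2)

theorem summands_listSum (l : List (Tm A)) : (listSum l).summands = l.flatMap Tm.summands := by
  match l with
  | [] | [_] => simp [listSum, Tm.summands]
  | t :: t' :: l => simp [listSum, Tm.summands, summands_listSum (t' :: l)]

theorem summands_prefixSum (L : List (Act A × Tm A)) : (prefixSum L).summands = L := by
  simp [prefixSum, summands_listSum, List.flatMap_map, Tm.summands]

theorem isPrefixSum_prefixSum (L : List (Act A × Tm A)) : (prefixSum L).IsPrefixSum := by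
  match L with
  | [] | [_] => trivial
  | x :: y :: L => exact ⟨trivial, isPrefixSum_prefixSum (y :: L)⟩

theorem isBCCSP_listSum {l : List (Tm A)} (h : ∀ t ∈ l, t.IsBCCSP) : (listSum l).IsBCCSP := by
  match l with
  | [] => trivial
  | [t] => exact h t (by simp)
  | t :: t' :: l => exact ⟨h t (by simp), isBCCSP_listSum fun s hs => h s (by simp_all)⟩

theorem isBCCSP_prefixSum {L : List (Act A × Tm A)} (h : ∀ x ∈ L, x.2.IsBCCSP) :
    (prefixSum L).IsBCCSP :=
  isBCCSP_listSum fun _ ht =>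
    let ⟨x, hx, hxt⟩ := List.mem_map.1 ht
    hxt ▸ h x hx

theorem Tm.IsBCCSP.prefixSum_summands {t : Tm A} (h : t.IsBCCSP) :
    (prefixSum t.summands).IsBCCSP :=
  isBCCSP_prefixSum fun _ hx => h.of_mem_summands hx

theorem step_prefixSum_iff {L : List (Act A × Tm A)} {μ : Act A} {t : Tm A} :
    Step (prefixSum L) μ t ↔ (μ, t) ∈ L := by
  rw [(isPrefixSum_prefixSum L).step_iff, summands_prefixSum]

theorem size_prefixSum_summands {t : Tm A} (h : t.IsPrefixSum) :
    (prefixSum t.summands).size = t.size := by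
  rw [(isPrefixSum_prefixSum _).size_eq, summands_prefixSum, h.size_eq]


end NormalForms

section ReadySimulation

variable {A : Type} {p q r : Tm A}

def ReadySim (p q : Tm A) : Prop := ∃ R, IsReadySim R ∧ R p q

theorem ReadySim.step (h : ReadySim p q) {μ : Act A} {p' : Tm A} (hs : Step p μ p') :
    ∃ q', Step q μ q' ∧ ReadySim p' q' := by
  obtain ⟨R, hR, hpq⟩ := h
  obtain ⟨q', hq', h'⟩ := hR.1 p q μ p' hpq hs
  exact ⟨q', hq', R, hR, h'⟩

theorem ReadySim.initials_iff (h : ReadySim p q) (μ : Act A) :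
    (∃ p', Step p μ p') ↔ ∃ q', Step q μ q' := by
  obtain ⟨R, hR, hpq⟩ := h
  exact hR.2 p q hpq μ

theorem ReadySim.refl (p : Tm A) : ReadySim p p :=
  ⟨Eq, ⟨by rintro p _ μ p' rfl h; exact ⟨p', h, rfl⟩, by rintro p _ rfl μ; rfl⟩, rfl⟩

theorem ReadySim.trans (h₁ : ReadySim p q) (h₂ : ReadySim q r) : ReadySim p r := by
  refine ⟨fun a c => ∃ b, ReadySim a b ∧ ReadySim b c, ⟨?_, ?_⟩, q, h₁, h₂⟩
  · rintro a c μ a' ⟨b, hab, hbc⟩ hs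
    obtain ⟨b', hb', hab'⟩ := hab.step hs
    obtain ⟨c', hc', hbc'⟩ := hbc.step hb'
    exact ⟨c', hc', b', hab', hbc'⟩
  · rintro a c ⟨b, hab, hbc⟩ μ
    exact (hab.initials_iff μ).trans (hbc.initials_iff μ)

theorem ReadySim.of_step (h₁ : ∀ μ p', Step p μ p' → ∃ q', Step q μ q' ∧ ReadySim p' q')
    (h₂ : ∀ μ q', Step q μ q' → ∃ p', Step p μ p') : ReadySim p q := by
  refine ⟨fun a b => a = p ∧ b = q ∨ ReadySim a b, ⟨?_, ?_⟩, .inl ⟨rfl, rfl⟩⟩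
  · rintro a b μ a' (⟨rfl, rfl⟩ | hab) hs
    · obtain ⟨q', hq', h'⟩ := h₁ μ a' hs
      exact ⟨q', hq', .inr h'⟩
    · obtain ⟨b', hb', h'⟩ := hab.step hs
      exact ⟨b', hb', .inr h'⟩
  · rintro a b (⟨rfl, rfl⟩ | hab) μ
    · exact ⟨fun ⟨a', ha'⟩ => (h₁ μ a' ha').imp fun _ h => h.1, fun ⟨b', hb'⟩ => h₂ μ b' hb'⟩
    · exact hab.initials_iff μ

theorem ReadySim.of_step_subset (h₁ : ∀ μ t, Step p μ t → Step q μ t)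
    (h₂ : ∀ μ q', Step q μ q' → ∃ p', Step p μ p') : ReadySim p q :=
  .of_step (fun μ p' hs => ⟨p', h₁ μ p' hs, .refl p'⟩) h₂

theorem RSEq.of_step_iff (h : ∀ μ t, Step p μ t ↔ Step q μ t) : RSEq p q :=
  ⟨ReadySim.of_step_subset (fun μ t => (h μ t).1) fun μ t ht => ⟨t, (h μ t).2 ht⟩,
    ReadySim.of_step_subset (fun μ t => (h μ t).2) fun μ t ht => ⟨t, (h μ t).1 ht⟩⟩

theorem ReadySim.pre (μ : Act A) (h : ReadySim p q) : ReadySim (.pre μ p) (.pre μ q) := by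
  refine .of_step (fun ν p' hs => ?_) fun ν q' hs => ?_
  · obtain ⟨rfl, rfl⟩ := step_pre_iff.1 hs
    exact ⟨q, .pre _ _, h⟩
  · obtain ⟨rfl, rfl⟩ := step_pre_iff.1 hs
    exact ⟨p, .pre _ _⟩

theorem ReadySim.plus {p' q' : Tm A} (h₁ : ReadySim p q) (h₂ : ReadySim p' q') :
    ReadySim (.plus p p') (.plus q q') := by
  refine .of_step (fun μ t hs => ?_) fun μ t hs => ?_
  · rcases step_plus_iff.1 hs with hs | hs
    · obtain ⟨u, hu, h'⟩ := h₁.step hs; exact ⟨u, .plusL hu, h'⟩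
    · obtain ⟨u, hu, h'⟩ := h₂.step hs; exact ⟨u, .plusR hu, h'⟩
  · rcases step_plus_iff.1 hs with hs | hs
    · obtain ⟨u, hu⟩ := (h₁.initials_iff μ).2 ⟨_, hs⟩; exact ⟨u, .plusL hu⟩
    · obtain ⟨u, hu⟩ := (h₂.initials_iff μ).2 ⟨_, hs⟩; exact ⟨u, .plusR hu⟩

theorem ReadySim.par {p' q' : Tm A} (h₁ : ReadySim p q) (h₂ : ReadySim p' q') :
    ReadySim (.par p p') (.par q q') := by
  refine ⟨fun x y => ∃ a b c d, x = .par a b ∧ y = .par c d ∧ ReadySim a c ∧ ReadySim b d,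
    ⟨?_, ?_⟩, p, p', q, q', rfl, rfl, h₁, h₂⟩
  · rintro x y μ x' ⟨a, b, c, d, rfl, rfl, hac, hbd⟩ hs
    rcases step_par_iff.1 hs with ⟨a', ha', rfl⟩ | ⟨b', hb', rfl⟩ |
      ⟨rfl, α, a', b', hα, ha', hb', rfl⟩
    · obtain ⟨c', hc', h'⟩ := hac.step ha'
      exact ⟨_, .parL hc', a', b, c', d, rfl, rfl, h', hbd⟩
    · obtain ⟨d', hd', h'⟩ := hbd.step hb'
      exact ⟨_, .parR hd', a, b', c, d', rfl, rfl, hac, h'⟩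
    · obtain ⟨c', hc', h₁'⟩ := hac.step ha'
      obtain ⟨d', hd', h₂'⟩ := hbd.step hb'
      exact ⟨_, .comm hα hc' hd', a', b', c', d', rfl, rfl, h₁', h₂'⟩
  · rintro x y ⟨a, b, c, d, rfl, rfl, hac, hbd⟩ μ
    have hL := hac.initials_iff
    have hR := hbd.initials_iff
    simp only [step_par_iff]
    constructor
    · rintro ⟨_, ⟨a', ha', rfl⟩ | ⟨b', hb', rfl⟩ | ⟨rfl, α, a', b', hα, ha', hb', rfl⟩⟩
      · obtain ⟨c', hc'⟩ := (hL μ).1 ⟨a', ha'⟩; exact ⟨_, .inl ⟨c', hc', rfl⟩⟩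
      · obtain ⟨d', hd'⟩ := (hR μ).1 ⟨b', hb'⟩; exact ⟨_, .inr (.inl ⟨d', hd', rfl⟩)⟩
      · obtain ⟨c', hc'⟩ := (hL α).1 ⟨a', ha'⟩
        obtain ⟨d', hd'⟩ := (hR α.co).1 ⟨b', hb'⟩
        exact ⟨_, .inr (.inr ⟨rfl, α, c', d', hα, hc', hd', rfl⟩)⟩
    · rintro ⟨_, ⟨c', hc', rfl⟩ | ⟨d', hd', rfl⟩ | ⟨rfl, α, c', d', hα, hc', hd', rfl⟩⟩
      · obtain ⟨a', ha'⟩ := (hL μ).2 ⟨c', hc'⟩; exact ⟨_, .inl ⟨a', ha', rfl⟩⟩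
      · obtain ⟨b', hb'⟩ := (hR μ).2 ⟨d', hd'⟩; exact ⟨_, .inr (.inl ⟨b', hb', rfl⟩)⟩
      · obtain ⟨a', ha'⟩ := (hL α).2 ⟨c', hc'⟩
        obtain ⟨b', hb'⟩ := (hR α.co).2 ⟨d', hd'⟩
        exact ⟨_, .inr (.inr ⟨rfl, α, a', b', hα, ha', hb', rfl⟩)⟩

theorem RSEq.refl (p : Tm A) : RSEq p p := ⟨ReadySim.refl p, ReadySim.refl p⟩

theorem RSEq.symm (h : RSEq p q) : RSEq q p := ⟨h.2, h.1⟩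

theorem RSEq.trans (h₁ : RSEq p q) (h₂ : RSEq q r) : RSEq p r :=
  ⟨ReadySim.trans h₁.1 h₂.1, ReadySim.trans h₂.2 h₁.2⟩

theorem RSEq.pre (μ : Act A) (h : RSEq p q) : RSEq (.pre μ p) (.pre μ q) :=
  ⟨ReadySim.pre μ h.1, ReadySim.pre μ h.2⟩

theorem RSEq.plus {p' q' : Tm A} (h₁ : RSEq p q) (h₂ : RSEq p' q') :
    RSEq (.plus p p') (.plus q q') :=
  ⟨ReadySim.plus h₁.1 h₂.1, ReadySim.plus h₁.2 h₂.2⟩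

theorem RSEq.par {p' q' : Tm A} (h₁ : RSEq p q) (h₂ : RSEq p' q') :
    RSEq (.par p p') (.par q q') :=
  ⟨ReadySim.par h₁.1 h₂.1, ReadySim.par h₁.2 h₂.2⟩

end ReadySimulation

section Schemas

variable {A : Type}

def instantiate (σ : ℕ → Tm A) (I : List (Act A × ℕ)) : List (Act A × Tm A) :=
  I.map fun p => (p.1, σ p.2)

theorem subst_listSum (σ : ℕ → Tm A) (l : List (Tm A)) :
    subst σ (listSum l) = listSum (l.map (subst σ)) := by
  match l with
  | [] | [_] => rfl
  | t :: t' :: l => simp only [listSum, subst, subst_listSum σ (t' :: l), List.map_cons]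

theorem subst_prefixed (σ : ℕ → Tm A) (I : List (Act A × ℕ)) :
    subst σ (prefixed I) = prefixSum (instantiate σ I) := by
  simp [prefixed, prefixSum, instantiate, subst_listSum, Function.comp_def, subst]

def listSubst (ts : List (Tm A)) (n : ℕ) : Tm A := ts.getD n .nil

def abstractFrom (k : ℕ) : List (Act A × Tm A) → List (Act A × ℕ)
  | [] => []
  | x :: L => (x.1, k) :: abstractFrom (k + 1) L

theorem map_fst_abstractFrom (k : ℕ) (L : List (Act A × Tm A)) :
    (abstractFrom k L).map Prod.fst = L.map Prod.fst := by
  induction L generalizing k with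
  | nil => rfl
  | cons x L ih => simp [abstractFrom, ih]

theorem map_snd_abstractFrom (k : ℕ) (L : List (Act A × Tm A)) :
    (abstractFrom k L).map Prod.snd = List.range' k L.length := by
  induction L generalizing k with
  | nil => rfl
  | cons x L ih => simp [abstractFrom, ih, List.range'_succ]

theorem instantiate_abstractFrom (pre post : List (Tm A)) (L : List (Act A × Tm A)) :
    instantiate (listSubst (pre ++ L.map Prod.snd ++ post)) (abstractFrom pre.length L) = L := by
  induction L generalizing pre with
  | nil => rfl
  | cons x L ih =>
    have := ih (pre ++ [x.2])
    simp_all [abstractFrom, instantiate, listSubst]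

theorem subst_listSum_pre_par (σ : ℕ → Tm A) (I : List (Act A × ℕ)) (M : Tm A) :
    subst σ (listSum (I.map fun p => .pre p.1 (.par (.var p.2) M))) =
      prefixSum ((instantiate σ I).map fun k => (k.1, .par k.2 (subst σ M))) := by
  simp [prefixSum, instantiate, subst_listSum, Function.comp_def, subst]

variable [DecidableEq A]

/-- The right-hand side of the expansion law for `prefixSum K ‖ prefixSum N`. -/
def expansion (K N : List (Act A × Tm A)) : Tm A :=
  listSum ((K.map fun k => .pre k.1 (.par k.2 (prefixSum N))) ++
    (N.map fun n => .pre n.1 (.par (prefixSum K) n.2)) ++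
    (K.flatMap fun k => (N.filter fun n => decide (k.1 ≠ .tau ∧ k.1 = n.1.co)).map
      fun n => .pre .tau (.par k.2 n.2)))

theorem subst_expansion_rhs (σ : ℕ → Tm A) (I J : List (Act A × ℕ)) :
    subst σ (listSum
      ((I.map fun p => Tm.pre p.1 (.par (.var p.2) (prefixed J))) ++
       (J.map fun q => Tm.pre q.1 (.par (prefixed I) (.var q.2))) ++
       (I.flatMap fun p =>
         (J.filter fun q => decide (p.1 ≠ Act.tau ∧ p.1 = q.1.co)).map fun q =>
           Tm.pre .tau (.par (.var p.2) (.var q.2))))) =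
      expansion (instantiate σ I) (instantiate σ J) := by
  simp [expansion, instantiate, subst_listSum, subst_prefixed, subst, List.map_flatMap,
    List.flatMap_map, List.filter_map, Function.comp_def]

end Schemas

section Soundness

variable {A : Type}

theorem RSEq.of_step_imp {p q : Tm A} (hfwd : ∀ μ t, Step p μ t → Step q μ t)
    (hback : ∀ μ t, Step q μ t → ∃ p', Step p μ p' ∧ ReadySim t p') : RSEq p q :=
  ⟨ReadySim.of_step_subset hfwd fun μ t ht => (hback μ t ht).imp fun _ h => h.1,
    ReadySim.of_step hback fun μ t ht => ⟨t, hfwd μ t ht⟩⟩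

theorem rsEq_plus_nil (t : Tm A) : RSEq (.plus t .nil) t :=
  .of_step_iff fun μ s => by simp [step_plus_iff, not_step_nil]

theorem rsEq_plus_comm (a b : Tm A) : RSEq (.plus a b) (.plus b a) :=
  .of_step_iff fun μ s => by simp only [step_plus_iff]; tauto

theorem rsEq_plus_assoc (a b c : Tm A) : RSEq (.plus (.plus a b) c) (.plus a (.plus b c)) :=
  .of_step_iff fun μ s => by simp only [step_plus_iff]; tauto

theorem rsEq_plus_idem (a : Tm A) : RSEq (.plus a a) a :=
  .of_step_iff fun μ s => by simp only [step_plus_iff, or_self]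

theorem step_par_nil_iff {t u : Tm A} {μ : Act A} :
    Step (.par t .nil) μ u ↔ ∃ t', Step t μ t' ∧ u = .par t' .nil := by
  simp [step_par_iff, not_step_nil]

theorem rsEq_par_nil (t : Tm A) : RSEq (.par t .nil) t := by
  constructor
  · refine ⟨fun x y => x = .par y .nil, ⟨?_, ?_⟩, rfl⟩
    · rintro x y μ x' rfl hs
      obtain ⟨y', hy', rfl⟩ := step_par_nil_iff.1 hs
      exact ⟨y', hy', rfl⟩
    · rintro x y rfl μ
      simp [step_par_nil_iff]
  · refine ⟨fun x y => y = .par x .nil, ⟨?_, ?_⟩, rfl⟩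
    · rintro x y μ x' rfl hs
      exact ⟨_, .parL hs, rfl⟩
    · rintro x y rfl μ
      simp [step_par_nil_iff]

theorem exists_step_par_swap {c d t : Tm A} {μ : Act A} (h : Step (.par c d) μ t) :
    ∃ c' d', t = .par c' d' ∧ Step (.par d c) μ (.par d' c') := by
  rcases step_par_iff.1 h with ⟨c', hc, rfl⟩ | ⟨d', hd, rfl⟩ | ⟨rfl, α, c', d', hα, h₁, h₂, rfl⟩
  · exact ⟨c', d, rfl, .parR hc⟩
  · exact ⟨c, d', rfl, .parL hd⟩
  · exact ⟨c', d', rfl, .comm (Act.co_ne_tau hα) h₂ ((Act.co_co α).symm ▸ h₁)⟩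

theorem readySim_par_comm (a b : Tm A) : ReadySim (.par a b) (.par b a) := by
  refine ⟨fun x y => ∃ c d, x = .par c d ∧ y = .par d c, ⟨?_, ?_⟩, a, b, rfl, rfl⟩
  · rintro x y μ x' ⟨c, d, rfl, rfl⟩ hs
    obtain ⟨c', d', rfl, hs'⟩ := exists_step_par_swap hs
    exact ⟨_, hs', c', d', rfl, rfl⟩
  · rintro x y ⟨c, d, rfl, rfl⟩ μ
    exact ⟨fun ⟨_, hs⟩ => (exists_step_par_swap hs).elim fun _ ⟨_, _, hs'⟩ => ⟨_, hs'⟩,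
      fun ⟨_, hs⟩ => (exists_step_par_swap hs).elim fun _ ⟨_, _, hs'⟩ => ⟨_, hs'⟩⟩

theorem rsEq_par_comm (a b : Tm A) : RSEq (.par a b) (.par b a) :=
  ⟨readySim_par_comm a b, readySim_par_comm b a⟩

theorem step_plus_pre_pre_iff {μ γ : Act A} {a b u t : Tm A} :
    Step (.plus (.plus (.pre μ a) (.pre μ b)) u) γ t ↔
      Step (.plus (.pre μ a) u) γ t ∨ Step (.plus (.pre μ b) u) γ t := by
  simp only [step_plus_iff, step_pre_iff]
  tauto

theorem readySim_plus_pre_left (μ : Act A) (a b u : Tm A) :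
    ReadySim (.plus (.pre μ a) u) (.plus (.plus (.pre μ a) (.pre μ b)) u) := by
  refine .of_step_subset (fun γ t h => step_plus_pre_pre_iff.2 (.inl h)) fun γ t h => ?_
  rcases step_plus_pre_pre_iff.1 h with h | h
  · exact ⟨t, h⟩
  · rcases step_plus_iff.1 h with h | h
    · obtain ⟨rfl, rfl⟩ := step_pre_iff.1 h
      exact ⟨a, .plusL (.pre _ _)⟩
    · exact ⟨t, .plusR h⟩

theorem readySim_plus_pre_right (μ : Act A) (a b u : Tm A) :
    ReadySim (.plus (.pre μ b) u) (.plus (.plus (.pre μ a) (.pre μ b)) u) := by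
  refine .of_step_subset (fun γ t h => step_plus_pre_pre_iff.2 (.inr h)) fun γ t h => ?_
  rcases step_plus_pre_pre_iff.1 h with h | h
  · rcases step_plus_iff.1 h with h | h
    · obtain ⟨rfl, rfl⟩ := step_pre_iff.1 h
      exact ⟨b, .plusL (.pre _ _)⟩
    · exact ⟨t, .plusR h⟩
  · exact ⟨t, h⟩

theorem rsEq_rs (μ ν : Act A) (a b c : Tm A) :
    RSEq (.pre μ (.plus (.plus (.pre ν a) (.pre ν b)) c))
      (.plus (.pre μ (.plus (.plus (.pre ν a) (.pre ν b)) c)) (.pre μ (.plus (.pre ν a) c))) := by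
  refine .of_step_imp (fun γ t h => .plusL h) fun γ t h => ?_
  rcases step_plus_iff.1 h with h | h <;> obtain ⟨rfl, rfl⟩ := step_pre_iff.1 h
  · exact ⟨_, .pre _ _, .refl _⟩
  · exact ⟨_, .pre _ _, readySim_plus_pre_left ν a b c⟩

theorem rsEq_rsp1 (μ ν : Act A) (a b u c d v : Tm A) :
    RSEq (.par (.plus (.plus (.pre μ a) (.pre μ b)) u) (.plus (.plus (.pre ν c) (.pre ν d)) v))
      (.plus (.plus (.plus
        (.par (.plus (.pre μ a) u) (.plus (.plus (.pre ν c) (.pre ν d)) v))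
        (.par (.plus (.pre μ b) u) (.plus (.plus (.pre ν c) (.pre ν d)) v)))
        (.par (.plus (.plus (.pre μ a) (.pre μ b)) u) (.plus (.pre ν c) v)))
        (.par (.plus (.plus (.pre μ a) (.pre μ b)) u) (.plus (.pre ν d) v))) := by
  refine .of_step_imp (fun γ t h => ?_) fun γ t h => ?_
  · rcases step_par_iff.1 h with ⟨l', hl, rfl⟩ | ⟨m', hm, rfl⟩ | ⟨rfl, α, l', m', hα, hl, hm, rfl⟩
    · rcases step_plus_pre_pre_iff.1 hl with hl | hl
      exacts [.plusL (.plusL (.plusL (.parL hl))), .plusL (.plusL (.plusR (.parL hl)))]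
    · rcases step_plus_pre_pre_iff.1 hm with hm | hm
      exacts [.plusL (.plusR (.parR hm)), .plusR (.parR hm)]
    · rcases step_plus_pre_pre_iff.1 hl with hl | hl
      exacts [.plusL (.plusL (.plusL (.comm hα hl hm))), .plusL (.plusL (.plusR (.comm hα hl hm)))]
  · simp only [step_plus_iff] at h
    rcases h with ((h | h) | h) | h
    · exact (ReadySim.par (readySim_plus_pre_left μ a b u) (.refl _)).step h
    · exact (ReadySim.par (readySim_plus_pre_right μ a b u) (.refl _)).step h
    · exact (ReadySim.par (.refl _) (readySim_plus_pre_left ν c d v)).step h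
    · exact (ReadySim.par (.refl _) (readySim_plus_pre_right ν c d v)).step h

theorem rsEq_rsp2 (K : List (Act A × Tm A)) (ν : Act A) (y z w : Tm A) :
    RSEq (.par (prefixSum K) (.plus (.plus (.pre ν y) (.pre ν z)) w))
      (.plus (.plus
        (.par (prefixSum K) (.plus (.pre ν y) w))
        (.par (prefixSum K) (.plus (.pre ν z) w)))
        (prefixSum (K.map fun k => (k.1, .par k.2 (.plus (.plus (.pre ν y) (.pre ν z)) w))))) := by
  refine .of_step_imp (fun γ t h => ?_) fun γ t h => ?_
  · rcases step_par_iff.1 h with ⟨l', hl, rfl⟩ | ⟨m', hm, rfl⟩ | ⟨rfl, α, l', m', hα, hl, hm, rfl⟩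
    · exact .plusR (step_prefixSum_iff.2 (List.mem_map_of_mem (step_prefixSum_iff.1 hl)))
    · rcases step_plus_pre_pre_iff.1 hm with hm | hm
      exacts [.plusL (.plusL (.parR hm)), .plusL (.plusR (.parR hm))]
    · rcases step_plus_pre_pre_iff.1 hm with hm | hm
      exacts [.plusL (.plusL (.comm hα hl hm)), .plusL (.plusR (.comm hα hl hm))]
  · simp only [step_plus_iff] at h
    rcases h with (h | h) | h
    · exact (ReadySim.par (.refl _) (readySim_plus_pre_left ν y z w)).step h
    · exact (ReadySim.par (.refl _) (readySim_plus_pre_right ν y z w)).step h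
    · obtain ⟨k, hk, hkt⟩ := List.mem_map.1 (step_prefixSum_iff.1 h)
      obtain ⟨rfl, rfl⟩ := Prod.mk.inj hkt
      exact ⟨_, .parL (step_prefixSum_iff.2 hk), .refl _⟩

variable [DecidableEq A]

theorem rsEq_expansion (K N : List (Act A × Tm A)) :
    RSEq (.par (prefixSum K) (prefixSum N)) (expansion K N) := by
  refine .of_step_iff fun γ t => ?_
  simp only [step_par_iff, expansion, step_listSum_iff, step_prefixSum_iff, List.mem_append,
    List.mem_map, List.mem_flatMap, List.mem_filter, decide_eq_true_eq]
  constructor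
  · rintro (⟨a', ha, rfl⟩ | ⟨b', hb, rfl⟩ | ⟨rfl, α, a', b', hα, ha, hb, rfl⟩)
    · exact ⟨_, .inl (.inl ⟨_, ha, rfl⟩), .pre _ _⟩
    · exact ⟨_, .inl (.inr ⟨_, hb, rfl⟩), .pre _ _⟩
    · exact ⟨_, .inr ⟨_, ha, _, ⟨hb, hα, (Act.co_co α).symm⟩, rfl⟩, .pre _ _⟩
  · rintro ⟨s, (⟨k, hk, rfl⟩ | ⟨n, hn, rfl⟩) | ⟨k, hk, n, ⟨hn, hne, heq⟩, rfl⟩, hs⟩ <;>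
      obtain ⟨rfl, rfl⟩ := step_pre_iff.1 hs
    · exact .inl ⟨k.2, hk, rfl⟩
    · exact .inr (.inl ⟨n.2, hn, rfl⟩)
    · exact .inr (.inr ⟨rfl, k.1, k.2, n.2, hne, hk, by simpa [heq] using hn, rfl⟩)

abbrev ERS (A : Type) [DecidableEq A] : Set (Eqn A) :=
  E1 A ∪ RS A ∪ RSP1 A ∪ RSP2 A ∪ EL2 A

theorem rsEq_subst_of_mem {t u : Tm A} (h : (t, u) ∈ ERS A) (σ : ℕ → Tm A) :
    RSEq (subst σ t) (subst σ u) := by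
  rcases h with (((h | h) | h) | h) | h
  · simp only [E1, E0, Set.mem_union, Set.mem_insert_iff, Set.mem_singleton_iff,
      Prod.mk.injEq] at h
    rcases h with (⟨rfl, rfl⟩ | ⟨rfl, rfl⟩ | ⟨rfl, rfl⟩ | ⟨rfl, rfl⟩) | ⟨rfl, rfl⟩ | ⟨rfl, rfl⟩
    exacts [rsEq_plus_nil _, rsEq_plus_comm _ _, rsEq_plus_assoc _ _ _, rsEq_plus_idem _,
      rsEq_par_nil _, rsEq_par_comm _ _]
  · obtain ⟨μ, ν, he⟩ := h
    obtain ⟨rfl, rfl⟩ := Prod.mk.inj he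
    exact rsEq_rs μ ν _ _ _
  · obtain ⟨μ, ν, he⟩ := h
    obtain ⟨rfl, rfl⟩ := Prod.mk.inj he
    exact rsEq_rsp1 μ ν _ _ _ _ _ _
  · obtain ⟨L, ν, iy, iz, iw, -, -, he⟩ := h
    obtain ⟨rfl, rfl⟩ := Prod.mk.inj he
    simpa [subst, subst_prefixed, subst_listSum_pre_par] using
      rsEq_rsp2 (instantiate σ L) ν (σ iy) (σ iz) (σ iw)
  · obtain ⟨I, J, -, -, -, he⟩ := h
    obtain ⟨rfl, rfl⟩ := Prod.mk.inj he
    rw [subst_expansion_rhs, subst, subst_prefixed, subst_prefixed]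
    exact rsEq_expansion _ _

theorem rsEq_of_deriv {t u : Tm A} (h : Deriv (ERS A) t u) : RSEq t u := by
  induction h with
  | ax σ hmem => exact rsEq_subst_of_mem hmem σ
  | refl t => exact .refl t
  | symm _ ih => exact ih.symm
  | trans _ _ ih₁ ih₂ => exact ih₁.trans ih₂
  | pre μ _ ih => exact ih.pre μ
  | plus _ _ ih₁ ih₂ => exact ih₁.plus ih₂
  | par _ _ ih₁ ih₂ => exact ih₁.par ih₂

end Soundness

section Derivations

variable {A : Type} [DecidableEq A] {t t' s s' : Tm A}

theorem deriv_plus_nil (t : Tm A) : Deriv (ERS A) (.plus t .nil) t :=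
  .ax (t := .plus (.var 0) .nil) (u := .var 0) (listSubst [t]) (by simp [E1, E0])

theorem deriv_plus_comm (a b : Tm A) : Deriv (ERS A) (.plus a b) (.plus b a) :=
  .ax (t := .plus (.var 0) (.var 1)) (u := .plus (.var 1) (.var 0)) (listSubst [a, b])
    (by simp [E1, E0])

theorem deriv_plus_assoc (a b c : Tm A) :
    Deriv (ERS A) (.plus (.plus a b) c) (.plus a (.plus b c)) :=
  .ax (t := .plus (.plus (.var 0) (.var 1)) (.var 2))
    (u := .plus (.var 0) (.plus (.var 1) (.var 2))) (listSubst [a, b, c]) (by simp [E1, E0])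

theorem deriv_plus_idem (a : Tm A) : Deriv (ERS A) (.plus a a) a :=
  .ax (t := .plus (.var 0) (.var 0)) (u := .var 0) (listSubst [a]) (by simp [E1, E0])

theorem deriv_par_comm (a b : Tm A) : Deriv (ERS A) (.par a b) (.par b a) :=
  .ax (t := .par (.var 0) (.var 1)) (u := .par (.var 1) (.var 0)) (listSubst [a, b])
    (by simp [E1, E0])

theorem deriv_rs (μ ν : Act A) (a b c : Tm A) :
    Deriv (ERS A) (.pre μ (.plus (.plus (.pre ν a) (.pre ν b)) c))
      (.plus (.pre μ (.plus (.plus (.pre ν a) (.pre ν b)) c)) (.pre μ (.plus (.pre ν a) c))) := by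
  have h := Deriv.ax (E := ERS A) (listSubst [a, b, c])
    (Or.inl (Or.inl (Or.inl (Or.inr (show (_, _) ∈ RS A from ⟨μ, ν, rfl⟩)))))
  exact h

theorem deriv_rsp1 (μ ν : Act A) (a b u c d v : Tm A) :
    Deriv (ERS A)
      (.par (.plus (.plus (.pre μ a) (.pre μ b)) u) (.plus (.plus (.pre ν c) (.pre ν d)) v))
      (.plus (.plus (.plus
        (.par (.plus (.pre μ a) u) (.plus (.plus (.pre ν c) (.pre ν d)) v))
        (.par (.plus (.pre μ b) u) (.plus (.plus (.pre ν c) (.pre ν d)) v)))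
        (.par (.plus (.plus (.pre μ a) (.pre μ b)) u) (.plus (.pre ν c) v)))
        (.par (.plus (.plus (.pre μ a) (.pre μ b)) u) (.plus (.pre ν d) v))) := by
  have h := Deriv.ax (E := ERS A) (listSubst [a, b, u, c, d, v])
    (Or.inl (Or.inl (Or.inr (show (_, _) ∈ RSP1 A from ⟨μ, ν, rfl⟩))))
  exact h

def Subsumes (t s : Tm A) : Prop := Deriv (ERS A) t (.plus t s)

namespace Subsumes

theorem of_deriv (h : Deriv (ERS A) t s) : Subsumes t s :=
  (deriv_plus_idem t).symm.trans (.plus (.refl t) h)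

theorem nil (t : Tm A) : Subsumes t .nil := (deriv_plus_nil t).symm

theorem plus {a b : Tm A} (ha : Subsumes t a) (hb : Subsumes t b) : Subsumes t (.plus a b) :=
  Deriv.trans ha <| (Deriv.plus hb (.refl a)).trans <|
    (deriv_plus_assoc _ _ _).trans (.plus (.refl t) (deriv_plus_comm _ _))

theorem trans {r : Tm A} (h₁ : Subsumes t s) (h₂ : Subsumes s r) : Subsumes t r :=
  Deriv.trans h₁ <| (Deriv.plus (.refl t) h₂).trans <|
    (deriv_plus_assoc _ _ _).symm.trans (.plus (Deriv.symm h₁) (.refl r))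

theorem congr (ht : Deriv (ERS A) t t') (hs : Deriv (ERS A) s s') (h : Subsumes t s) :
    Subsumes t' s' :=
  ht.symm.trans (Deriv.trans h (.plus ht hs))

theorem plus_right {a : Tm A} (h : Subsumes a s) (b : Tm A) : Subsumes (.plus a b) s :=
  (Deriv.plus h (.refl b)).trans <| (deriv_plus_assoc _ _ _).trans <|
    (Deriv.plus (.refl a) (deriv_plus_comm _ _)).trans (deriv_plus_assoc _ _ _).symm

theorem plus_left {b : Tm A} (h : Subsumes b s) (a : Tm A) : Subsumes (.plus a b) s :=
  (h.plus_right a).congr (deriv_plus_comm _ _) (.refl s)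

theorem antisymm (h₁ : Subsumes t s) (h₂ : Subsumes s t) : Deriv (ERS A) t s :=
  Deriv.trans h₁ ((deriv_plus_comm t s).trans (Deriv.symm h₂))

end Subsumes

theorem subsumes_pre_of_mem (ht : t.IsPrefixSum) {x : Act A × Tm A} (hx : x ∈ t.summands) :
    Subsumes t (.pre x.1 x.2) := by
  induction t with
  | pre μ u =>
    obtain rfl : x = (μ, u) := by simpa [Tm.summands] using hx
    exact .of_deriv (.refl _)
  | plus a b iha ihb =>
    rcases List.mem_append.1 hx with hx | hx
    exacts [(iha ht.1 hx).plus_right b, (ihb ht.2 hx).plus_left a]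
  | _ => simp [Tm.summands] at hx

theorem subsumes_of_summands_subset (ht : t.IsPrefixSum) (hs : s.IsPrefixSum)
    (h : s.summands ⊆ t.summands) : Subsumes t s := by
  induction s with
  | nil => exact .nil t
  | pre μ u => exact subsumes_pre_of_mem ht (h (List.mem_singleton_self _))
  | plus a b iha ihb =>
    exact (iha hs.1 fun x hx => h (by simp [Tm.summands, hx])).plus
      (ihb hs.2 fun x hx => h (by simp [Tm.summands, hx]))
  | var _ | par _ _ => exact hs.elim

theorem deriv_of_summands_subset (ht : t.IsPrefixSum) (hs : s.IsPrefixSum)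
    (h₁ : t.summands ⊆ s.summands) (h₂ : s.summands ⊆ t.summands) : Deriv (ERS A) t s :=
  (subsumes_of_summands_subset ht hs h₂).antisymm (subsumes_of_summands_subset hs ht h₁)

theorem deriv_of_summands_perm (ht : t.IsPrefixSum) (hs : s.IsPrefixSum)
    (h : t.summands.Perm s.summands) : Deriv (ERS A) t s :=
  deriv_of_summands_subset ht hs h.subset h.symm.subset

theorem deriv_prefixSum_summands (ht : t.IsPrefixSum) :
    Deriv (ERS A) t (prefixSum t.summands) :=
  deriv_of_summands_perm ht (isPrefixSum_prefixSum _) (by rw [summands_prefixSum])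

theorem deriv_prefixSum_of_perm {L L' : List (Act A × Tm A)} (h : L.Perm L') :
    Deriv (ERS A) (prefixSum L) (prefixSum L') :=
  deriv_of_summands_perm (isPrefixSum_prefixSum _) (isPrefixSum_prefixSum _)
    (by rwa [summands_prefixSum, summands_prefixSum])

theorem subsumes_prefixSum {L : List (Act A × Tm A)} (h : ∀ x ∈ L, Subsumes t (.pre x.1 x.2)) :
    Subsumes t (prefixSum L) := by
  match L with
  | [] => exact .nil t
  | [x] => exact h x (by simp)
  | x :: y :: L =>
    exact (h x (by simp)).plus (subsumes_prefixSum (L := y :: L) fun z hz => h z (by simp_all))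

end Derivations

section Completeness

variable {A : Type} [DecidableEq A]

theorem subsumes_pre_of_dup (μ ν : Act A) (b c : Tm A) (N : List (Act A × Tm A)) :
    Subsumes (.pre μ (prefixSum ((ν, c) :: (ν, b) :: N))) (.pre μ (prefixSum ((ν, b) :: N))) := by
  have hRS : Subsumes (.pre μ (.plus (.plus (.pre ν b) (.pre ν c)) (prefixSum N)))
      (.pre μ (.plus (.pre ν b) (prefixSum N))) := deriv_rs μ ν b c (prefixSum N)
  have hN := isPrefixSum_prefixSum N
  refine hRS.congr (.pre μ ?_) (.pre μ ?_)
  · refine deriv_of_summands_perm ⟨⟨trivial, trivial⟩, hN⟩ (isPrefixSum_prefixSum _) ?_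
    simpa [Tm.summands, summands_prefixSum] using List.Perm.swap _ _ _
  · exact deriv_of_summands_perm ⟨trivial, hN⟩ (isPrefixSum_prefixSum _)
      (by simp [Tm.summands, summands_prefixSum])

/-- Iterated RS. -/
theorem subsumes_pre_prefixSum_of_subset {L L' : List (Act A × Tm A)} (hsub : L' ⊆ L)
    (hcov : ∀ x ∈ L, ∃ y ∈ L', y.1 = x.1) (μ : Act A) :
    Subsumes (.pre μ (prefixSum L)) (.pre μ (prefixSum L')) := by
  classical
  by_cases hL : L ⊆ L'
  · exact .of_deriv (.pre μ (deriv_of_summands_subset (isPrefixSum_prefixSum _)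
      (isPrefixSum_prefixSum _) (by simpa [summands_prefixSum]) (by simpa [summands_prefixSum])))
  obtain ⟨x, hxL, hxL'⟩ : ∃ x ∈ L, x ∉ L' := by simpa [List.subset_def] using hL
  obtain ⟨y, hyL', hyx⟩ := hcov x hxL
  obtain ⟨ν, c⟩ := x
  obtain ⟨ν', b⟩ := y
  obtain rfl : ν = ν' := hyx.symm
  have hyM : (ν, b) ∈ L.erase (ν, c) :=
    (List.mem_erase_of_ne (ne_of_mem_of_not_mem hyL' hxL')).2 (hsub hyL')
  have hdel : Subsumes (.pre μ (prefixSum L)) (.pre μ (prefixSum (L.erase (ν, c)))) :=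
    (subsumes_pre_of_dup μ ν b c (((L.erase (ν, c)).erase (ν, b)))).congr
      (.pre μ (deriv_prefixSum_of_perm
        ((List.perm_cons_erase hxL).trans (.cons _ (List.perm_cons_erase hyM))).symm))
      (.pre μ (deriv_prefixSum_of_perm (List.perm_cons_erase hyM).symm))
  refine hdel.trans (subsumes_pre_prefixSum_of_subset (fun z hz => ?_)
    (fun z hz => hcov z (List.mem_of_mem_erase hz)) μ)
  exact (List.mem_erase_of_ne (ne_of_mem_of_not_mem hz hxL')).2 (hsub hz)
termination_by L.length
decreasing_by
  classical
  rw [List.length_erase_of_mem hxL]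
  exact Nat.pred_lt (List.length_pos_of_mem hxL).ne'

theorem subsumes_pre_of_readySim {p q : Tm A} (hp : p.IsBCCSP) (hq : q.IsBCCSP)
    (hpq : ReadySim p q) (μ : Act A) : Subsumes (.pre μ q) (.pre μ p) := by
  have hmatch : ∀ x ∈ p.summands,
      ∃ y ∈ q.summands, y.1 = x.1 ∧ Subsumes (.pre x.1 y.2) (.pre x.1 x.2) := by
    intro x hx
    obtain ⟨q', hq', h'⟩ := hpq.step (hp.isPrefixSum.step_iff.2 hx)
    have hy := hq.isPrefixSum.step_iff.1 hq'
    exact ⟨(x.1, q'), hy, rfl,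
      subsumes_pre_of_readySim (hp.of_mem_summands hx) (hq.of_mem_summands hy) h' x.1⟩
  have : Nonempty (Act A × Tm A) := ⟨(.tau, .nil)⟩
  choose! f hfq hf1 hfsub using hmatch
  set P := p.summands
  set Q := P.map f
  have hQP : Subsumes (prefixSum Q) (prefixSum P) := subsumes_prefixSum fun x hx =>
    (subsumes_pre_of_mem (isPrefixSum_prefixSum Q)
      (by rw [summands_prefixSum]; exact List.mem_map_of_mem hx)).trans
      (by rw [hf1 x hx]; exact hfsub x hx)
  have hQ : Deriv (ERS A) (.pre μ (prefixSum Q)) (.pre μ (prefixSum (P ++ Q))) :=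
    .pre μ <| Deriv.trans hQP <| (deriv_plus_comm _ _).trans <|
      deriv_of_summands_perm ⟨isPrefixSum_prefixSum P, isPrefixSum_prefixSum Q⟩
        (isPrefixSum_prefixSum _) (by simp [Tm.summands, summands_prefixSum])
  have hPQ : ∀ y ∈ P ++ Q, ∃ x ∈ P, x.1 = y.1 := by
    simp only [List.mem_append, List.mem_map, Q]
    rintro y (hy | ⟨x, hx, rfl⟩)
    exacts [⟨y, hy, rfl⟩, ⟨x, hx, (hf1 x hx).symm⟩]
  -- readiness: every action of `q` is one of `p`, hence of `Q`
  have hqQ : Subsumes (.pre μ (prefixSum q.summands)) (.pre μ (prefixSum Q)) := by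
    refine subsumes_pre_prefixSum_of_subset (fun y hy => ?_) (fun y hy => ?_) μ
    · obtain ⟨x, hx, rfl⟩ := List.mem_map.1 hy
      exact hfq x hx
    · obtain ⟨p', hp'⟩ := (hpq.initials_iff y.1).2 ⟨y.2, hq.isPrefixSum.step_iff.2 hy⟩
      have hx := hp.isPrefixSum.step_iff.1 hp'
      exact ⟨f (y.1, p'), List.mem_map_of_mem hx, hf1 _ hx⟩
  have hQP' : Subsumes (.pre μ (prefixSum Q)) (.pre μ (prefixSum P)) :=
    (subsumes_pre_prefixSum_of_subset (List.subset_append_left _ _) hPQ μ).congr hQ.symm (.refl _)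
  exact (hqQ.trans hQP').congr (.pre μ (deriv_prefixSum_summands hq.isPrefixSum).symm)
    (.pre μ (deriv_prefixSum_summands hp.isPrefixSum).symm)
termination_by p.size + q.size
decreasing_by
  exact Nat.add_lt_add (Tm.size_lt_of_mem_summands hx) (Tm.size_lt_of_mem_summands hy)

theorem subsumes_of_readySim {p q : Tm A} (hp : p.IsBCCSP) (hq : q.IsBCCSP)
    (hpq : ReadySim p q) : Subsumes q p := by
  refine (subsumes_prefixSum fun x hx => ?_).congr (.refl q)
    (deriv_prefixSum_summands hp.isPrefixSum).symm
  obtain ⟨q', hq', h'⟩ := hpq.step (hp.isPrefixSum.step_iff.2 hx)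
  have hy := hq.isPrefixSum.step_iff.1 hq'
  exact (subsumes_pre_of_mem hq.isPrefixSum hy).trans
    (subsumes_pre_of_readySim (hp.of_mem_summands hx) (hq.of_mem_summands hy) h' x.1)

theorem deriv_of_rsEq {p q : Tm A} (hp : p.IsBCCSP) (hq : q.IsBCCSP) (h : RSEq p q) :
    Deriv (ERS A) p q :=
  (subsumes_of_readySim hq hp h.2).antisymm (subsumes_of_readySim hp hq h.1)

end Completeness

section Elimination

variable {A : Type} [DecidableEq A]

theorem deriv_expansion {K N : List (Act A × Tm A)} (hK : (K.map Prod.fst).Nodup)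
    (hN : (N.map Prod.fst).Nodup) :
    Deriv (ERS A) (.par (prefixSum K) (prefixSum N)) (expansion K N) := by
  have hK' := instantiate_abstractFrom [] (N.map Prod.snd) K
  have hN' := instantiate_abstractFrom (K.map Prod.snd) [] N
  simp only [List.nil_append, List.append_nil, List.length_nil, List.length_map] at hK' hN'
  have hvars :
      ((abstractFrom 0 K).map Prod.snd ++ (abstractFrom K.length N).map Prod.snd).Nodup := by
    simp only [map_snd_abstractFrom, List.nodup_append, List.mem_range'_1]
    exact ⟨List.nodup_range', List.nodup_range', fun a ha b hb => by omega⟩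
  have h := Deriv.ax (E := ERS A) (listSubst (K.map Prod.snd ++ N.map Prod.snd))
    (Or.inr (show (_, _) ∈ EL2 A from ⟨abstractFrom 0 K, abstractFrom K.length N,
      by rwa [map_fst_abstractFrom], by rwa [map_fst_abstractFrom], hvars, rfl⟩))
  rwa [subst, subst_prefixed, subst_prefixed, subst_expansion_rhs, hK', hN'] at h

theorem deriv_rsp2 {K : List (Act A × Tm A)} (hK : (K.map Prod.fst).Nodup) (ν : Act A)
    (y z w : Tm A) :
    Deriv (ERS A) (.par (prefixSum K) (.plus (.plus (.pre ν y) (.pre ν z)) w))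
      (.plus (.plus
        (.par (prefixSum K) (.plus (.pre ν y) w))
        (.par (prefixSum K) (.plus (.pre ν z) w)))
        (prefixSum (K.map fun k => (k.1, .par k.2 (.plus (.plus (.pre ν y) (.pre ν z)) w))))) := by
  have hK' := instantiate_abstractFrom [] [y, z, w] K
  simp only [List.nil_append, List.length_nil] at hK'
  have hvars :
      ((abstractFrom 0 K).map Prod.snd ++ [K.length, K.length + 1, K.length + 2]).Nodup := by
    simp only [map_snd_abstractFrom, List.nodup_append, List.mem_range'_1]
    refine ⟨List.nodup_range', by simp, fun a ha b hb => by simp at hb; omega⟩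
  have h := Deriv.ax (E := ERS A) (listSubst (K.map Prod.snd ++ [y, z, w]))
    (Or.inl (Or.inr (show (_, _) ∈ RSP2 A from ⟨abstractFrom 0 K, ν, K.length, K.length + 1,
      K.length + 2, by rwa [map_fst_abstractFrom], hvars, rfl⟩)))
  simpa [subst, subst_prefixed, subst_listSum_pre_par, hK', listSubst] using h

def Normalizable (t : Tm A) : Prop := ∃ r, r.IsBCCSP ∧ Deriv (ERS A) t r

theorem Normalizable.of_deriv {t u : Tm A} (h : Deriv (ERS A) t u) (hu : Normalizable u) :
    Normalizable t :=
  let ⟨r, hr, hur⟩ := hu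
  ⟨r, hr, h.trans hur⟩

theorem Normalizable.pre (μ : Act A) {t : Tm A} (h : Normalizable t) :
    Normalizable (.pre μ t) :=
  let ⟨r, hr, htr⟩ := h
  ⟨.pre μ r, hr, .pre μ htr⟩

theorem Normalizable.plus {t u : Tm A} (ht : Normalizable t) (hu : Normalizable u) :
    Normalizable (.plus t u) :=
  let ⟨r, hr, htr⟩ := ht
  let ⟨r', hr', hur'⟩ := hu
  ⟨.plus r r', ⟨hr, hr'⟩, .plus htr hur'⟩

theorem normalizable_listSum {l : List (Tm A)} (h : ∀ t ∈ l, Normalizable t) :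
    Normalizable (listSum l) := by
  match l with
  | [] => exact ⟨.nil, trivial, .refl _⟩
  | [t] => exact h t (by simp)
  | t :: t' :: l =>
    exact (h t (by simp)).plus (normalizable_listSum (l := t' :: l) fun s hs => h s (by simp_all))

theorem normalizable_prefixSum {L : List (Act A × Tm A)} (h : ∀ x ∈ L, Normalizable x.2) :
    Normalizable (prefixSum L) :=
  normalizable_listSum fun _ ht =>
    let ⟨x, hx, hxt⟩ := List.mem_map.1 ht
    hxt ▸ (h x hx).pre x.1

theorem normalizable_expansion {K N : List (Act A × Tm A)}
    (hK : ∀ k ∈ K, Normalizable (.par k.2 (prefixSum N)))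
    (hN : ∀ n ∈ N, Normalizable (.par (prefixSum K) n.2))
    (hKN : ∀ k ∈ K, ∀ n ∈ N, Normalizable (.par k.2 n.2)) : Normalizable (expansion K N) := by
  refine normalizable_listSum fun t ht => ?_
  simp only [List.mem_append, List.mem_map, List.mem_flatMap, List.mem_filter] at ht
  rcases ht with (⟨k, hk, rfl⟩ | ⟨n, hn, rfl⟩) | ⟨k, hk, n, ⟨hn, -⟩, rfl⟩
  exacts [(hK k hk).pre _, (hN n hn).pre _, (hKN k hk n hn).pre _]

theorem exists_perm_of_not_nodup {α β : Type*} {L : List (α × β)}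
    (h : ¬ (L.map Prod.fst).Nodup) : ∃ a b c N, L.Perm ((a, b) :: (a, c) :: N) := by
  classical
  induction L with
  | nil => simp at h
  | cons x L ih =>
    by_cases hx : x.1 ∈ L.map Prod.fst
    · obtain ⟨y, hy, hyx⟩ := List.mem_map.1 hx
      refine ⟨x.1, x.2, y.2, L.erase y, ?_⟩
      rw [show (x.1, y.2) = y from Prod.ext hyx.symm rfl]
      exact .cons x (List.perm_cons_erase hy)
    · obtain ⟨a, b, c, N, hL⟩ := ih (by simp_all)
      exact ⟨a, b, c, x :: N, (hL.cons x).trans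
        ((List.Perm.swap _ _ _).trans (.cons _ (List.Perm.swap _ _ _)))⟩

/-- Brings `s` into the shape of the left-hand sides of RSP1 and RSP2. -/
theorem exists_deriv_of_not_nodup {s : Tm A} (hs : s.IsBCCSP)
    (h : ¬ (s.summands.map Prod.fst).Nodup) :
    ∃ ν b c N, b.IsBCCSP ∧ c.IsBCCSP ∧ (prefixSum N).IsBCCSP ∧
      b.size + c.size + (prefixSum N).size + 2 = s.size ∧
      Deriv (ERS A) s (.plus (.plus (.pre ν b) (.pre ν c)) (prefixSum N)) := by
  obtain ⟨ν, b, c, N, hperm⟩ := exists_perm_of_not_nodup h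
  have hmem : ∀ x ∈ N, x ∈ s.summands := fun x hx => hperm.symm.subset (by simp [hx])
  refine ⟨ν, b, c, N, hs.of_mem_summands (x := (ν, b)) (hperm.symm.subset (by simp)),
    hs.of_mem_summands (x := (ν, c)) (hperm.symm.subset (by simp)),
    isBCCSP_prefixSum fun x hx => hs.of_mem_summands (hmem x hx), ?_, ?_⟩
  · rw [hs.isPrefixSum.size_eq, (hperm.map _).sum_eq, (isPrefixSum_prefixSum N).size_eq,
      summands_prefixSum]
    simp only [List.map_cons, List.sum_cons]
    omega
  · refine deriv_of_summands_perm hs.isPrefixSum ⟨⟨trivial, trivial⟩, isPrefixSum_prefixSum N⟩ ?_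
    simpa [Tm.summands, summands_prefixSum] using hperm

variable (A) in
def ParNormalizableBelow (n : ℕ) : Prop :=
  ∀ s s' : Tm A, s.IsBCCSP → s'.IsBCCSP → s.size + s'.size < n → Normalizable (.par s s')

theorem normalizable_par_of_nodup {s s' : Tm A} (ih : ParNormalizableBelow A (s.size + s'.size))
    (hs : s.IsBCCSP) (hs' : s'.IsBCCSP) (h : (s.summands.map Prod.fst).Nodup)
    (h' : (s'.summands.map Prod.fst).Nodup) : Normalizable (.par s s') := by
  have hsize := size_prefixSum_summands hs.isPrefixSum
  have hsize' := size_prefixSum_summands hs'.isPrefixSum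
  have hK := hs.prefixSum_summands
  have hN := hs'.prefixSum_summands
  refine .of_deriv ((Deriv.par (deriv_prefixSum_summands hs.isPrefixSum)
    (deriv_prefixSum_summands hs'.isPrefixSum)).trans (deriv_expansion h h'))
    (normalizable_expansion (fun k hk => ?_) (fun n hn => ?_) fun k hk n hn => ?_)
  · have := Tm.size_lt_of_mem_summands hk
    exact ih _ _ (hs.of_mem_summands hk) hN (by omega)
  · have := Tm.size_lt_of_mem_summands hn
    exact ih _ _ hK (hs'.of_mem_summands hn) (by omega)
  · have := Tm.size_lt_of_mem_summands hk
    have := Tm.size_lt_of_mem_summands hn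
    exact ih _ _ (hs.of_mem_summands hk) (hs'.of_mem_summands hn) (by omega)

theorem normalizable_par_of_not_nodup_right {s s' : Tm A}
    (ih : ParNormalizableBelow A (s.size + s'.size)) (hs : s.IsBCCSP) (hs' : s'.IsBCCSP)
    (h : (s.summands.map Prod.fst).Nodup) (h' : ¬ (s'.summands.map Prod.fst).Nodup) :
    Normalizable (.par s s') := by
  obtain ⟨ν, c, d, V, hc, hd, hV, hsize', hder'⟩ := exists_deriv_of_not_nodup hs' h'
  have hsize := size_prefixSum_summands hs.isPrefixSum
  have hK := hs.prefixSum_summands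
  refine .of_deriv ((Deriv.par (deriv_prefixSum_summands hs.isPrefixSum) hder').trans
    (deriv_rsp2 h ν c d (prefixSum V))) (.plus (.plus ?_ ?_) (normalizable_prefixSum ?_))
  · exact ih _ _ hK ⟨hc, hV⟩ (by simp only [Tm.size]; omega)
  · exact ih _ _ hK ⟨hd, hV⟩ (by simp only [Tm.size]; omega)
  · simp only [List.mem_map]
    rintro _ ⟨k, hk, rfl⟩
    have := Tm.size_lt_of_mem_summands hk
    exact ih _ _ (hs.of_mem_summands hk) ⟨⟨hc, hd⟩, hV⟩ (by simp only [Tm.size]; omega)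

theorem normalizable_par_of_not_nodup {s s' : Tm A}
    (ih : ParNormalizableBelow A (s.size + s'.size)) (hs : s.IsBCCSP) (hs' : s'.IsBCCSP)
    (h : ¬ (s.summands.map Prod.fst).Nodup) (h' : ¬ (s'.summands.map Prod.fst).Nodup) :
    Normalizable (.par s s') := by
  obtain ⟨μ, a, b, U, ha, hb, hU, hsize, hder⟩ := exists_deriv_of_not_nodup hs h
  obtain ⟨ν, c, d, V, hc, hd, hV, hsize', hder'⟩ := exists_deriv_of_not_nodup hs' h'
  refine .of_deriv ((Deriv.par hder hder').trans
    (deriv_rsp1 μ ν a b (prefixSum U) c d (prefixSum V))) (.plus (.plus (.plus ?_ ?_) ?_) ?_)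
  · exact ih _ _ ⟨ha, hU⟩ ⟨⟨hc, hd⟩, hV⟩ (by simp only [Tm.size]; omega)
  · exact ih _ _ ⟨hb, hU⟩ ⟨⟨hc, hd⟩, hV⟩ (by simp only [Tm.size]; omega)
  · exact ih _ _ ⟨⟨ha, hb⟩, hU⟩ ⟨hc, hV⟩ (by simp only [Tm.size]; omega)
  · exact ih _ _ ⟨⟨ha, hb⟩, hU⟩ ⟨hd, hV⟩ (by simp only [Tm.size]; omega)

theorem normalizable_par {s s' : Tm A} (hs : s.IsBCCSP) (hs' : s'.IsBCCSP) :
    Normalizable (.par s s') := by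
  have ih : ParNormalizableBelow A (s.size + s'.size) :=
    fun t t' ht ht' hlt => normalizable_par ht ht'
  by_cases h : (s.summands.map Prod.fst).Nodup <;> by_cases h' : (s'.summands.map Prod.fst).Nodup
  · exact normalizable_par_of_nodup ih hs hs' h h'
  · exact normalizable_par_of_not_nodup_right ih hs hs' h h'
  · exact .of_deriv (deriv_par_comm s s')
      (normalizable_par_of_not_nodup_right (by rwa [add_comm]) hs' hs h' h)
  · exact normalizable_par_of_not_nodup ih hs hs' h h'
termination_by s.size + s'.size
decreasing_by exact hlt

theorem normalizable_of_closed {t : Tm A} (ht : Closed t) : Normalizable t := by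
  induction t with
  | nil => exact ⟨.nil, trivial, .refl _⟩
  | var => exact ht.elim
  | pre μ t ih => exact (ih ht).pre μ
  | plus t u iht ihu => exact (iht ht.1).plus (ihu ht.2)
  | par t u iht ihu =>
    obtain ⟨r, hr, htr⟩ := iht ht.1
    obtain ⟨r', hr', hur'⟩ := ihu ht.2
    exact .of_deriv (.par htr hur') (normalizable_par hr hr')

end Elimination

/-- **Theorem**: `E_RS = E₁ ∪ {RS, RSP1, RSP2, EL2}` is sound and ground-complete
modulo ready simulation equivalence over CCS. -/
theorem stmt_8 (A : Type) [DecidableEq A] :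
    SystemSound RSEq (E1 A ∪ RS A ∪ RSP1 A ∪ RSP2 A ∪ EL2 A) ∧
    GroundComplete RSEq (E1 A ∪ RS A ∪ RSP1 A ∪ RSP2 A ∪ EL2 A) := by
  refine ⟨fun e he σ _ => rsEq_subst_of_mem he σ, fun p q hp hq hpq => ?_⟩
  obtain ⟨p', hp', hpp'⟩ := normalizable_of_closed hp
  obtain ⟨q', hq', hqq'⟩ := normalizable_of_closed hq
  have hpq' : RSEq p' q' := ((rsEq_of_deriv hpp').symm.trans hpq).trans (rsEq_of_deriv hqq')
  exact hpp'.trans ((deriv_of_rsEq hp' hq' hpq').trans hqq'.symm)
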